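/- For the Grover matrix A_G = (1/3)[[-1,2,2],[2,-1,2],[2,2,-1]] and any function φ : ℤ → ℂ not identically zero, the function Ψ(x) = (φ(x), (1/2)(φ(x) + φ(x-1)), φ(x-1)) satisfies U_{A_G}Ψ = Ψ, and hence μ(x) = (5/4)(|φ(x)|² + |φ(x-1)|²) + (1/2)·Re(φ(x)·conj(φ(x-1))) is a stationary measure of the three-state Grover walk. -/

import Mathlib

open Complex Matrix Finset

noncomputable def walk (A : Matrix (Fin 3) (Fin 3) ℂ) (Ψ : ℤ → Fin 3 → ℂ) : ℤ → Fin 3 → ℂ :=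
  fun x => ![∑ j, A 0 j * Ψ (x + 1) j, ∑ j, A 1 j * Ψ x j, ∑ j, A 2 j * Ψ (x - 1) j]

noncomputable def groverMatrix : Matrix (Fin 3) (Fin 3) ℂ :=
  (1 / 3 : ℂ) • !![-1, 2, 2; 2, -1, 2; 2, 2, -1]

/-!
Write `v(a, b) = (a, (a + b)/2, b)`, so that `Ψ x = v(φ x, φ (x - 1))`. Since `A_G = (2/3) J - I`,
the Grover matrix maps `v(a, b)` to its reversal `v(b, a)`. The walk reads the first coordinate of
`A_G Ψ(x + 1) = v(φ x, φ (x + 1))`, the middle one of `A_G Ψ x` and the last one of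
`A_G Ψ(x - 1) = v(φ (x - 2), φ (x - 1))`, which returns `φ x`, `(φ x + φ (x - 1))/2` and
`φ (x - 1)`: the walk fixes `Ψ`. The formula for the measure is `‖v(a, b)‖²` expanded with
`|a + b|² = |a|² + |b|² + 2 Re (a b̄)`.
-/

noncomputable def averagedVector (a b : ℂ) : Fin 3 → ℂ :=
  ![a, (1 / 2 : ℂ) * (a + b), b]

lemma walk_apply (A : Matrix (Fin 3) (Fin 3) ℂ) (Ψ : ℤ → Fin 3 → ℂ) (x : ℤ) :
    walk A Ψ x = ![(A *ᵥ Ψ (x + 1)) 0, (A *ᵥ Ψ x) 1, (A *ᵥ Ψ (x - 1)) 2] :=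
  rfl

lemma groverMatrix_mulVec_averagedVector (a b : ℂ) :
    groverMatrix *ᵥ averagedVector a b = averagedVector b a := by
  funext i
  fin_cases i <;>
    simp [groverMatrix, averagedVector, mulVec, dotProduct, Fin.sum_univ_three] <;> ring

lemma sum_norm_sq_averagedVector (a b : ℂ) :
    ∑ i, ‖averagedVector a b i‖ ^ 2 =
      (5 / 4) * (‖a‖ ^ 2 + ‖b‖ ^ 2) + (1 / 2) * (a * (starRingEnd ℂ) b).re := by
  have h_half : ‖(1 / 2 : ℂ) * (a + b)‖ ^ 2 = (1 / 4) * (normSq a + normSq b) +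
      (1 / 2) * (a * (starRingEnd ℂ) b).re := by
    rw [norm_mul, mul_pow, Complex.sq_norm, Complex.sq_norm, normSq_add]
    norm_num
    ring
  rw [Fin.sum_univ_three]
  simp only [averagedVector, cons_val_zero, cons_val_one, cons_val_two, head_cons, tail_cons]
  rw [h_half, Complex.sq_norm, Complex.sq_norm]
  ring

theorem grover_type2_stationary_general (φ : ℤ → ℂ)
    (Ψ : ℤ → Fin 3 → ℂ)
    (hΨ : Ψ = fun x => ![φ x, (1 / 2 : ℂ) * (φ x + φ (x - 1)), φ (x - 1)]) :
    walk groverMatrix Ψ = Ψ ∧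
    ∀ x : ℤ, ∑ i, ‖Ψ x i‖ ^ 2 =
      (5 / 4) * (‖φ x‖ ^ 2 + ‖φ (x - 1)‖ ^ 2) + (1 / 2) * (φ x * (starRingEnd ℂ) (φ (x - 1))).re := by
  have hΨ_avg : ∀ x, Ψ x = averagedVector (φ x) (φ (x - 1)) := fun x => by rw [hΨ]; rfl
  refine ⟨funext fun x => ?_, fun x => by rw [hΨ_avg]; exact sum_norm_sq_averagedVector _ _⟩
  rw [walk_apply, hΨ_avg, hΨ_avg, hΨ_avg, add_sub_cancel_right,
    groverMatrix_mulVec_averagedVector, groverMatrix_mulVec_averagedVector,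
    groverMatrix_mulVec_averagedVector]
  funext i
  fin_cases i
  · rfl
  · simp [averagedVector, add_comm]
  · rfl

theorem grover_type2_stationary (φ : ℤ → ℂ) (hφ : ∃ x, φ x ≠ 0)
    (Ψ : ℤ → Fin 3 → ℂ)
    (hΨ : Ψ = fun x => ![φ x, (1 / 2 : ℂ) * (φ x + φ (x - 1)), φ (x - 1)]) :
    walk groverMatrix Ψ = Ψ ∧
    ∀ x : ℤ, ∑ i, ‖Ψ x i‖ ^ 2 =
      (5 / 4) * (‖φ x‖ ^ 2 + ‖φ (x - 1)‖ ^ 2) + (1 / 2) * (φ x * (starRingEnd ℂ) (φ (x - 1))).re :=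
  grover_type2_stationary_general φ Ψ hΨ
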